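/- The part of K₋ lying in the interval [−10, 1] is exactly the image of C under h: K₋ ∩ [−10, 1] = h '' C. -/

import Mathlib

noncomputable section

/-- The affine contraction of ratio 1/100 fixing 0. -/
def T0 (x : ℝ) : ℝ := x / 100

/-- The affine contraction of ratio 1/100 fixing 1. -/
def T1 (x : ℝ) : ℝ := 1 + (x - 1) / 100

/-- The affine contraction of ratio 1/100 fixing -1. -/
def Tm1 (x : ℝ) : ℝ := -1 + (x + 1) / 100

/-- The inverse of `T0`. -/
def T0inv (x : ℝ) : ℝ := 100 * x

/-- The `i`-th iterate of `T0` for `i ≥ 0`, and the `|i|`-th iterate of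
`T0⁻¹ : x ↦ 100 x` for `i < 0`. -/
def T0z : ℤ → ℝ → ℝ
  | Int.ofNat n => T0^[n]
  | Int.negSucc n => T0inv^[n + 1]

/-- The set `K₊ = {0} ∪ ⋃ i ∈ ℤ, T₀^[i] '' (C₁ ∪ C₋₁)` where `C₁ = T₁ '' C`,
`C₋₁ = T₋₁ '' C`. -/
def Kplus (C : Set ℝ) : Set ℝ := {0} ∪ ⋃ i : ℤ, T0z i '' (T1 '' C ∪ Tm1 '' C)

/-- The map `Q : x ↦ x/10`. -/
def Q (x : ℝ) : ℝ := x / 10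

/-- The set `K₋ = Q '' K₊`. -/
def Kminus (C : Set ℝ) : Set ℝ := Q '' Kplus C

/-- The bijection `h` : `x ↦ x/10` for `x ≥ 0`, `x ↦ 10 x` for `x < 0`. -/
def hmap (x : ℝ) : ℝ := if 0 ≤ x then x / 10 else 10 * x

/-- The inverse of `h` : `y ↦ 10 y` for `y ≥ 0`, `y ↦ y/10` for `y < 0`. -/
def hmapInv (y : ℝ) : ℝ := if 0 ≤ y then 10 * y else y / 10

/-- The inverse of `T₋₁` : `x ↦ 100 x + 99`. -/
def Tm1inv (x : ℝ) : ℝ := 100 * x + 99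

/-! Writing `D = C₁ ∪ C₋₁ ⊆ {t | 49/50 ≤ |t| ≤ 1}`, the self-similarity equation gives
`C = {0} ∪ ⋃ n ∈ ℕ, D / 100ⁿ`: a nonzero point of `C` can only be pulled back through `T₀`
finitely often before it leaves `[-1, 1]`. Meanwhile `K₊ = {0} ∪ ⋃ i ∈ ℤ, D / 100ⁱ`, and the
window `[-100, 10]` keeps exactly the exponents `i ≥ 0` of the positive pieces and `i ≥ -1` of
the negative ones; `h` undoes this shift by one on the negative side. -/

def SelfSimilar (C : Set ℝ) : Prop := C = Tm1 '' C ∪ T0 '' C ∪ T1 '' C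

lemma T0_iterate_apply (n : ℕ) (x : ℝ) : T0^[n] x = x / 100 ^ n := by
  induction n with
  | zero => simp
  | succ n ih => rw [Function.iterate_succ_apply', ih, T0, pow_succ, div_div]

lemma T0inv_iterate_apply (n : ℕ) (x : ℝ) : T0inv^[n] x = 100 ^ n * x := by
  induction n with
  | zero => simp
  | succ n ih => rw [Function.iterate_succ_apply', ih, T0inv, pow_succ', mul_assoc]

lemma T0z_apply (i : ℤ) (x : ℝ) : T0z i x = x / 100 ^ i := by
  cases i with
  | ofNat n => exact (T0_iterate_apply n x).trans (by simp)
  | negSucc n =>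
    change T0inv^[n + 1] x = _
    rw [T0inv_iterate_apply, zpow_negSucc, div_inv_eq_mul, mul_comm]

namespace SelfSimilar

variable {C : Set ℝ}

lemma subset_union_images (hself : SelfSimilar C) : C ⊆ Tm1 '' C ∪ T0 '' C ∪ T1 '' C :=
  Eq.subset hself

lemma union_images_subset (hself : SelfSimilar C) : Tm1 '' C ∪ T0 '' C ∪ T1 '' C ⊆ C :=
  Eq.superset hself

lemma T1_image_subset (hself : SelfSimilar C) : T1 '' C ⊆ C :=
  Set.subset_union_right.trans hself.union_images_subset

lemma Tm1_image_subset (hself : SelfSimilar C) : Tm1 '' C ⊆ C :=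
  (Set.subset_union_left.trans Set.subset_union_left).trans hself.union_images_subset

lemma div_pow_mem (hself : SelfSimilar C) {x : ℝ} (hx : x ∈ C) (n : ℕ) :
    x / 100 ^ n ∈ C := by
  induction n with
  | zero => simpa using hx
  | succ n ih =>
    rw [pow_succ, ← div_div]
    exact hself.union_images_subset (Or.inl (Or.inr ⟨_, ih, rfl⟩))

lemma div_zpow_mem (hself : SelfSimilar C) {x : ℝ} (hx : x ∈ C) {i : ℤ} (hi : 0 ≤ i) :
    x / 100 ^ i ∈ C := by
  lift i to ℕ using hi
  exact_mod_cast hself.div_pow_mem hx i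

lemma zero_mem (hself : SelfSimilar C) (hne : C.Nonempty) (hcomp : IsCompact C) :
    (0 : ℝ) ∈ C := by
  obtain ⟨x, hx⟩ := hne
  have hlim : Filter.Tendsto (fun n : ℕ ↦ x / 100 ^ n) Filter.atTop (nhds 0) :=
    tendsto_const_nhds.div_atTop (tendsto_pow_atTop_atTop_of_one_lt (by norm_num))
  exact hcomp.isClosed.mem_of_tendsto hlim (.of_forall (hself.div_pow_mem hx))

lemma subset_Icc (hself : SelfSimilar C) (hne : C.Nonempty) (hcomp : IsCompact C) :
    C ⊆ Set.Icc (-1) 1 := by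
  have hsup : sSup C ≤ 1 := by
    have hle := fun y (hy : y ∈ C) ↦ le_csSup hcomp.bddAbove hy
    rcases hself.subset_union_images (hcomp.sSup_mem hne) with
      (⟨y, hy, hs⟩ | ⟨y, hy, hs⟩) | ⟨y, hy, hs⟩ <;>
    · simp only [Tm1, T0, T1] at hs; linarith [hle y hy]
  have hinf : -1 ≤ sInf C := by
    have hle := fun y (hy : y ∈ C) ↦ csInf_le hcomp.bddBelow hy
    rcases hself.subset_union_images (hcomp.sInf_mem hne) with
      (⟨y, hy, hs⟩ | ⟨y, hy, hs⟩) | ⟨y, hy, hs⟩ <;>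
    · simp only [Tm1, T0, T1] at hs; linarith [hle y hy]
  exact fun x hx ↦ ⟨hinf.trans (csInf_le hcomp.bddBelow hx),
    (le_csSup hcomp.bddAbove hx).trans hsup⟩

lemma exists_eq_div_pow (hself : SelfSimilar C) (hne : C.Nonempty) (hcomp : IsCompact C)
    {x : ℝ} (hx : x ∈ C) (hx0 : x ≠ 0) :
    ∃ n : ℕ, ∃ t ∈ T1 '' C ∪ Tm1 '' C, x = t / 100 ^ n := by
  have hC := hself.subset_Icc hne hcomp
  -- `1 < 100ᴺ |x|` bounds how often `x` can be pulled back through `T₀` without leaving `[-1, 1]`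
  suffices ∀ N : ℕ, ∀ x ∈ C, 1 < 100 ^ N * |x| →
      ∃ n : ℕ, ∃ t ∈ T1 '' C ∪ Tm1 '' C, x = t / 100 ^ n by
    obtain ⟨N, hN⟩ := pow_unbounded_of_one_lt |x|⁻¹ (by norm_num : (1 : ℝ) < 100)
    refine this N x hx ?_
    rwa [inv_lt_iff_one_lt_mul₀ (abs_pos.2 hx0)] at hN
  intro N
  induction N with
  | zero =>
    intro x hx hlt
    have := abs_le.2 (hC hx)
    simp only [pow_zero, one_mul] at hlt
    linarith
  | succ N ih =>
    intro x hx hlt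
    rcases hself.subset_union_images hx with (hm | ⟨y, hy, rfl⟩) | hp
    · exact ⟨0, x, Or.inr hm, by simp⟩
    · have hyN : 1 < 100 ^ N * |y| := by
        rw [T0, abs_div, pow_succ] at hlt
        rwa [abs_of_pos (by norm_num : (0 : ℝ) < 100), mul_assoc,
          mul_div_cancel₀ _ (by norm_num)] at hlt
      obtain ⟨n, t, ht, rfl⟩ := ih y hy hyN
      exact ⟨n + 1, t, ht, by rw [T0, div_div, pow_succ]⟩
    · exact ⟨0, x, Or.inl hp, by simp⟩

lemma hmap_mem_Kminus (hself : SelfSimilar C) (hne : C.Nonempty) (hcomp : IsCompact C)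
    {x : ℝ} (hx : x ∈ C) : hmap x ∈ Kminus C := by
  rcases eq_or_ne x 0 with rfl | hx0
  · exact ⟨0, Or.inl rfl, by simp [Q, hmap]⟩
  obtain ⟨n, t, ht, rfl⟩ := hself.exists_eq_div_pow hne hcomp hx hx0
  unfold hmap
  split_ifs
  · exact ⟨_, Or.inr (Set.mem_iUnion.2 ⟨n, t, ht, by rw [T0z_apply, zpow_natCast]⟩), rfl⟩
  · refine ⟨_, Or.inr (Set.mem_iUnion.2 ⟨n - 1, t, ht, rfl⟩), ?_⟩
    rw [T0z_apply, zpow_sub_one₀ (by norm_num), zpow_natCast, Q]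
    ring

lemma Q_T0z_T1_mem_hmap_image (hself : SelfSimilar C) (hne : C.Nonempty)
    (hcomp : IsCompact C) {c : ℝ} (hc : c ∈ C) {i : ℤ} (hle : T0z i (T1 c) ≤ 10) :
    Q (T0z i (T1 c)) ∈ hmap '' C := by
  have hc1 := hself.subset_Icc hne hcomp hc
  have ht : 49 / 50 ≤ T1 c := by rw [T1]; linarith [hc1.1]
  rw [T0z_apply] at hle ⊢
  have hi : 0 ≤ i := by
    have : (100 : ℝ) ^ (-1 : ℤ) < 100 ^ i := by
      rw [div_le_iff₀ (by positivity)] at hle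
      norm_num; linarith
    have := (zpow_lt_zpow_iff_right₀ (by norm_num : (1 : ℝ) < 100)).1 this
    omega
  refine ⟨_, hself.div_zpow_mem (hself.T1_image_subset ⟨c, hc, rfl⟩) hi, ?_⟩
  rw [hmap, if_pos (by positivity), Q]

lemma Q_T0z_Tm1_mem_hmap_image (hself : SelfSimilar C) (hne : C.Nonempty)
    (hcomp : IsCompact C) {c : ℝ} (hc : c ∈ C) {i : ℤ} (hle : -100 ≤ T0z i (Tm1 c)) :
    Q (T0z i (Tm1 c)) ∈ hmap '' C := by
  have hc1 := hself.subset_Icc hne hcomp hc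
  have ht : Tm1 c ≤ -(49 / 50) := by rw [Tm1]; linarith [hc1.2]
  rw [T0z_apply] at hle ⊢
  have hi : 0 ≤ i + 1 := by
    have : (100 : ℝ) ^ (-2 : ℤ) < 100 ^ i := by
      rw [le_div_iff₀ (by positivity)] at hle
      norm_num; linarith
    have := (zpow_lt_zpow_iff_right₀ (by norm_num : (1 : ℝ) < 100)).1 this
    omega
  refine ⟨_, hself.div_zpow_mem (hself.Tm1_image_subset ⟨c, hc, rfl⟩) hi, ?_⟩
  have hneg : Tm1 c / 100 ^ (i + 1) < 0 := div_neg_of_neg_of_pos (by linarith) (by positivity)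
  rw [hmap, if_neg hneg.not_ge, Q, zpow_add_one₀ (by norm_num)]
  field_simp
  ring

end SelfSimilar

theorem stmt_11 (C : Set ℝ) (hne : C.Nonempty) (hcomp : IsCompact C)
    (hself : C = Tm1 '' C ∪ T0 '' C ∪ T1 '' C) :
    Kminus C ∩ Set.Icc (-10 : ℝ) 1 = hmap '' C := by
  have hC : SelfSimilar C := hself
  ext y
  constructor
  · rintro ⟨⟨z, hz | hz, rfl⟩, hzI⟩
    · rw [Set.mem_singleton_iff.1 hz]
      exact ⟨0, hC.zero_mem hne hcomp, by simp [hmap, Q]⟩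
    obtain ⟨i, t, ⟨c, hc, rfl⟩ | ⟨c, hc, rfl⟩, rfl⟩ := Set.mem_iUnion.1 hz <;>
      simp only [Set.mem_Icc, Q] at hzI
    · exact hC.Q_T0z_T1_mem_hmap_image hne hcomp hc (by linarith)
    · exact hC.Q_T0z_Tm1_mem_hmap_image hne hcomp hc (by linarith)
  · rintro ⟨x, hx, rfl⟩
    have hx1 := hC.subset_Icc hne hcomp hx
    refine ⟨hC.hmap_mem_Kminus hne hcomp hx, ?_⟩
    unfold hmap
    split_ifs <;> constructor <;> linarith [hx1.1, hx1.2]
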